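/- arXiv:2110.02159 — 7 statements merged into one kernel-verified Lean document; each statement's English description precedes it below -/
import Mathlib

section
/- Let K ≥ 1, β ∈ [0,1), and let q ∈ ℝ^K be a probability vector (nonnegative entries summing to 1). Define the matrix Q ∈ ℝ^{K×K} by Q[y',y] = (1-β)·𝟙[y'=y] + β·q(y'). Then for every unit vector v ∈ ℝ^K, ‖Qv‖₂ ≥ (1-β)/√(2K). In particular the minimum singular value of Q is at least (1-β)/√(2K). -/
open Finset Real

/-! Write `Q = (1 - β) • 1 + β • P` with `P = q 𝟙ᵀ`. Since `𝟙ᵀ q = 1`, `P` is idempotent, so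
`A = 1 - β • P` satisfies `A * Q = (1 - β) • 1`. Hence `(1 - β) v = A (Q v)`, and by Cauchy–Schwarz
row by row `(1 - β)² ≤ ‖A‖_F² ‖Q v‖²`. Entrywise `(δᵢⱼ - β qᵢ)² ≤ δᵢⱼ + qᵢ`, so `‖A‖_F² ≤ 2K`. -/

lemma IsIdempotentElem.one_sub_smul_mul_eq {R A : Type*} [CommRing R] [Ring A] [Algebra R A]
    (β : R) {P : A} (hP : IsIdempotentElem P) : (1 - β • P) * ((1 - β) • 1 + β • P) = (1 - β) • 1 := by
  simp only [sub_mul, mul_add, one_mul, smul_mul_smul_comm, mul_one, hP.eq]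
  module

namespace Matrix

variable {n : Type*} [Fintype n]

lemma sum_sq_mulVec_le {m : Type*} [Fintype m] (A : Matrix m n ℝ) (w : n → ℝ) :
    ∑ i, (A *ᵥ w) i ^ 2 ≤ (∑ i, ∑ j, A i j ^ 2) * ∑ j, w j ^ 2 := by
  rw [Finset.sum_mul]
  gcongr with i
  exact Finset.sum_mul_sq_le_sq_mul_sq _ _ _

lemma isIdempotentElem_vecMulVec_one {q : n → ℝ} (hq : ∑ i, q i = 1) :
    IsIdempotentElem (vecMulVec q (1 : n → ℝ)) := by
  rw [IsIdempotentElem, vecMulVec_mul_vecMulVec]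
  simp [dotProduct, hq]

lemma sum_sq_one_sub_smul_vecMulVec_le [DecidableEq n] {β : ℝ}
    (hβ0 : 0 ≤ β) (hβ1 : β ≤ 1) {q : n → ℝ} (hq0 : ∀ i, 0 ≤ q i) (hq1 : ∑ i, q i = 1) :
    ∑ i, ∑ j, (1 - β • vecMulVec q (1 : n → ℝ)) i j ^ 2 ≤ 2 * Fintype.card n := by
  have hq_le : ∀ i, q i ≤ 1 := fun i => hq1 ▸ single_le_sum (fun j _ => hq0 j) (mem_univ i)
  have entry : ∀ i j, (1 - β • vecMulVec q (1 : n → ℝ)) i j ^ 2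
      ≤ (1 : Matrix n n ℝ) i j + q i := by
    intro i j
    have hβq0 : 0 ≤ β * q i := mul_nonneg hβ0 (hq0 i)
    have hβq1 : β * q i ≤ 1 := mul_le_one₀ hβ1 (hq0 i) (hq_le i)
    have hsq : (β * q i) ^ 2 ≤ β * q i := by nlinarith
    have hij_eq : (1 - β • vecMulVec q (1 : n → ℝ)) i j = (1 : Matrix n n ℝ) i j - β * q i := by
      simp
    rw [hij_eq]
    rcases eq_or_ne i j with rfl | hij
    · rw [one_apply_eq]
      nlinarith [hq0 i]
    · rw [one_apply_ne hij]
      nlinarith [mul_le_of_le_one_left (hq0 i) hβ1]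
  calc _ ≤ ∑ i, ∑ j, ((1 : Matrix n n ℝ) i j + q i) := by gcongr with i _ j; exact entry i j
    _ = 2 * Fintype.card n := by
      simp only [one_apply, sum_add_distrib, sum_ite_eq, mem_univ, ↓reduceIte, sum_const,
        card_univ, nsmul_eq_mul, mul_one, ← mul_sum, hq1]
      ring

end Matrix

open Matrix in
theorem stmt_0_general (K : ℕ) (β : ℝ) (hβ0 : 0 ≤ β) (hβ1 : β < 1)
    (q : Fin K → ℝ) (hq0 : ∀ y, 0 ≤ q y) (hq1 : ∑ y, q y = 1)
    (Q : Matrix (Fin K) (Fin K) ℝ)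
    (hQ : ∀ y' y, Q y' y = (1 - β) * (if y' = y then 1 else 0) + β * q y')
    (v : Fin K → ℝ) (hv : Real.sqrt (∑ i, v i ^ 2) = 1) :
    (1 - β) / Real.sqrt (2 * K) ≤ Real.sqrt (∑ i, (Q.mulVec v) i ^ 2) := by
  have hQ_eq : Q = (1 - β) • 1 + β • vecMulVec q (1 : Fin K → ℝ) := by
    ext i j
    simp [hQ, one_apply]
  set A := 1 - β • vecMulVec q (1 : Fin K → ℝ)
  have hAQ : A *ᵥ (Q *ᵥ v) = (1 - β) • v := by
    rw [mulVec_mulVec, hQ_eq, (isIdempotentElem_vecMulVec_one hq1).one_sub_smul_mul_eq β,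
      smul_mulVec, one_mulVec]
  have hv1 : ∑ i, v i ^ 2 = 1 := Real.sqrt_eq_one.mp hv
  have key : (1 - β) ^ 2 ≤ 2 * K * ∑ i, (Q *ᵥ v) i ^ 2 := calc
    (1 - β) ^ 2 = ∑ i, (A *ᵥ (Q *ᵥ v)) i ^ 2 := by simp [hAQ, mul_pow, ← mul_sum, hv1]
    _ ≤ (∑ i, ∑ j, A i j ^ 2) * ∑ i, (Q *ᵥ v) i ^ 2 := sum_sq_mulVec_le A _
    _ ≤ 2 * K * ∑ i, (Q *ᵥ v) i ^ 2 := by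
      gcongr
      simpa only [Fintype.card_fin] using sum_sq_one_sub_smul_vecMulVec_le hβ0 hβ1.le hq0 hq1
  refine div_le_of_le_mul₀ (Real.sqrt_nonneg _) (Real.sqrt_nonneg _) ?_
  rw [← Real.sqrt_mul' _ (by positivity)]
  exact (le_abs_self _).trans (Real.abs_le_sqrt (by linarith))

theorem stmt_0 (K : ℕ) (hK : 1 ≤ K) (β : ℝ) (hβ0 : 0 ≤ β) (hβ1 : β < 1)
    (q : Fin K → ℝ) (hq0 : ∀ y, 0 ≤ q y) (hq1 : ∑ y, q y = 1)
    (Q : Matrix (Fin K) (Fin K) ℝ)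
    (hQ : ∀ y' y, Q y' y = (1 - β) * (if y' = y then 1 else 0) + β * q y')
    (v : Fin K → ℝ) (hv : Real.sqrt (∑ i, v i ^ 2) = 1) :
    (1 - β) / Real.sqrt (2 * K) ≤ Real.sqrt (∑ i, (Q.mulVec v) i ^ 2) :=
  stmt_0_general K β hβ0 hβ1 q hq0 hq1 Q hQ v hv
end

section
/- For all real x ≥ 2: (1 + 1/x)^x ≤ e + 3/x. -/
open Real

theorem Real.one_add_div_rpow_le_exp {a x : ℝ} (hx : 0 < x) (ha : -x ≤ a) :
    (1 + a / x) ^ x ≤ exp a := by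
  have hbase : 0 ≤ 1 + a / x := by
    rw [← neg_le_iff_add_nonneg', le_div_iff₀ hx]
    linarith
  calc (1 + a / x) ^ x ≤ exp (a / x) ^ x :=
        rpow_le_rpow hbase (by linarith [add_one_le_exp (a / x)]) hx.le
    _ = exp a := by rw [← exp_mul, div_mul_cancel₀ a hx.ne']

theorem stmt_4 (x : ℝ) (hx : 2 ≤ x) :
    (1 + 1 / x) ^ x ≤ Real.exp 1 + 3 / x := by
  have hx0 : 0 < x := by linarith
  have h3 : 0 ≤ 3 / x := by positivity
  linarith [one_add_div_rpow_le_exp hx0 (by linarith : -x ≤ 1)]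
end

section
/- For all real x ≥ 2: (1 - 1/x)^{-x} ≤ e + 3/x. -/
/-!
Put `t = 1/x ∈ (0, 1/2]`, so that the left side is `exp (-log (1 - t) / t)`. Truncating the
logarithm series after two terms and bounding the tail by a geometric series gives
`-log (1 - t) / t ≤ 1 + 5t/6`, and the quadratic Taylor bound `exp v ≤ 1 + v + 3v²/4` on `[0, 1]`
then yields `e · (1 + (105/96) t)`, which is at most `e + 3t` because `e < 2.7183`.
-/

open Real Finset

namespace Real

theorem neg_log_one_sub_le_sum_range_add {t : ℝ} (h₀ : 0 ≤ t) (h₁ : t < 1) (n : ℕ) :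
    -log (1 - t) ≤
      ∑ i ∈ range n, t ^ (i + 1) / (i + 1) + t ^ (n + 1) / ((n + 1) * (1 - t)) := by
  have hlog := hasSum_pow_div_log_of_abs_lt_one (abs_lt.2 ⟨by linarith, h₁⟩)
  have htail := (hasSum_nat_add_iff' n).2 hlog
  have hgeom := (hasSum_geometric_of_lt_one h₀ h₁).mul_left (t ^ (n + 1) / (n + 1))
  have hterm : ∀ i : ℕ, t ^ (i + n + 1) / ((i + n : ℕ) + 1 : ℝ) ≤
      t ^ (n + 1) / (n + 1) * t ^ i := fun i => by
    rw [div_mul_eq_mul_div, ← pow_add, show n + 1 + i = i + n + 1 by ring]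
    apply div_le_div_of_nonneg_left (by positivity) (by positivity)
    push_cast
    linarith [(i.cast_nonneg : (0 : ℝ) ≤ i)]
  have := hasSum_le hterm htail hgeom
  rw [← div_eq_mul_inv, div_div] at this
  linarith

theorem exp_le_one_add_add_sq {v : ℝ} (h₀ : 0 ≤ v) (h₁ : v ≤ 1) :
    exp v ≤ 1 + v + 3 / 4 * v ^ 2 := by
  have h := exp_bound' h₀ h₁ (n := 2) two_pos
  norm_num [sum_range_succ] at h
  linarith

theorem neg_log_one_sub_div_le {t : ℝ} (h₀ : 0 < t) (h₁ : t ≤ 1 / 2) :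
    -log (1 - t) / t ≤ 1 + 5 / 6 * t := by
  have hlog := neg_log_one_sub_le_sum_range_add h₀.le (by linarith) 2
  norm_num [sum_range_succ] at hlog
  have htail : t ^ 3 / (3 * (1 - t)) ≤ t ^ 2 / 3 := by
    rw [div_le_div_iff₀ (by nlinarith) (by norm_num)]
    nlinarith [pow_pos h₀ 3]
  rw [div_le_iff₀ h₀]
  nlinarith

theorem one_sub_rpow_neg_inv_le {t : ℝ} (h₀ : 0 < t) (h₁ : t ≤ 1 / 2) :
    (1 - t) ^ (-t⁻¹) ≤ exp 1 + 3 * t := by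
  have hexp := exp_le_one_add_add_sq (v := 5 / 6 * t) (by positivity) (by linarith)
  have he : exp 1 < 2.7183 := by linarith [exp_one_lt_d9]
  calc (1 - t) ^ (-t⁻¹) = exp (-log (1 - t) / t) := by
        rw [rpow_def_of_pos (by linarith)]; ring_nf
    _ ≤ exp (1 + 5 / 6 * t) := exp_le_exp.2 (neg_log_one_sub_div_le h₀ h₁)
    _ ≤ exp 1 * (1 + 5 / 6 * t + 3 / 4 * (5 / 6 * t) ^ 2) := by
        rw [exp_add]; exact mul_le_mul_of_nonneg_left hexp (exp_pos 1).le
    _ ≤ exp 1 * (1 + 105 / 96 * t) := mul_le_mul_of_nonneg_left (by nlinarith) (exp_pos 1).le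
    _ ≤ exp 1 + 3 * t := by nlinarith

end Real

theorem stmt_5 (x : ℝ) (hx : 2 ≤ x) :
    (1 - 1 / x) ^ (-x) ≤ Real.exp 1 + 3 / x := by
  have h := one_sub_rpow_neg_inv_le (t := 1 / x) (by positivity)
    (by rw [div_le_div_iff₀ (by linarith) two_pos]; linarith)
  rwa [inv_div, div_one, mul_one_div] at h
end

section
/- For all real x ≥ 2: (1 + 1/x)^{√x} ≤ 1 + 3/√x. -/
/-! Since `log (1 + 1/x) ≤ 1/x`, the left side is at most `exp (√x / x) = exp (1/√x)`, and
`1/√x ∈ [0, 1]`; on `[0, 1]` the exponential lies below its chord `1 + (e - 1) t`, and `e - 1 ≤ 3`. -/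

open Real

lemma Real.exp_le_one_add_exp_one_sub_one_mul {t : ℝ} (h0 : 0 ≤ t) (h1 : t ≤ 1) :
    exp t ≤ 1 + (exp 1 - 1) * t := by
  have hchord := convexOn_exp.2 (Set.mem_univ 0) (Set.mem_univ 1) (sub_nonneg.2 h1) h0
    (sub_add_cancel 1 t)
  simp only [smul_eq_mul, mul_zero, mul_one, zero_add, exp_zero] at hchord
  linarith

lemma Real.one_add_rpow_le_exp_mul {a y : ℝ} (ha : 0 < 1 + a) (hy : 0 ≤ y) :
    (1 + a) ^ y ≤ exp (a * y) := by
  rw [rpow_def_of_pos ha]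
  gcongr
  linarith [log_le_sub_one_of_pos ha]

theorem stmt_6 (x : ℝ) (hx : 2 ≤ x) :
    (1 + 1 / x) ^ Real.sqrt x ≤ 1 + 3 / Real.sqrt x := by
  have hx0 : 0 < x := by linarith
  have hsqrt_pos : 0 < √x := sqrt_pos.2 hx0
  have hexponent : 1 / x * √x = 1 / √x := by rw [one_div_mul_eq_div, sqrt_div_self']
  have hinv_le_one : 1 / √x ≤ 1 := by
    rw [div_le_one hsqrt_pos, one_le_sqrt]
    linarith
  calc (1 + 1 / x) ^ √x ≤ exp (1 / √x) := by
        rw [← hexponent]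
        exact one_add_rpow_le_exp_mul (by positivity) hsqrt_pos.le
    _ ≤ 1 + (exp 1 - 1) * (1 / √x) :=
        exp_le_one_add_exp_one_sub_one_mul (by positivity) hinv_le_one
    _ ≤ 1 + 3 * (1 / √x) := by
        gcongr
        linarith [exp_one_lt_d9]
    _ = 1 + 3 / √x := by ring
end

section
/- For all real x ≥ 2: (1 - 1/x)^{-√x} ≤ 1 + 3/√x. -/
/-! Bernoulli's inequality with exponent `x / 2 ≥ 1` gives `(1 - 1/x)^(x/2) ≥ 1/2`, hence
`(1 - 1/x)^(-√x) ≤ 4^(1/√x)`; and `t ↦ 4^t` is convex, so it lies below its chord `1 + 3t`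
on `[0, 1]`. -/

namespace Real

theorem one_half_le_one_sub_inv_rpow_half {x : ℝ} (hx : 2 ≤ x) :
    1 / 2 ≤ (1 - 1 / x) ^ (x / 2) := by
  have hx0 : x ≠ 0 := by positivity
  have hs : -1 ≤ -(1 / x) := by
    rw [neg_le_neg_iff, div_le_one (by positivity)]; linarith
  calc 1 / 2 = 1 + x / 2 * -(1 / x) := by field_simp; ring
    _ ≤ (1 + -(1 / x)) ^ (x / 2) := one_add_mul_self_le_rpow_one_add hs (by linarith)
    _ = (1 - 1 / x) ^ (x / 2) := by rw [← sub_eq_add_neg]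

theorem one_sub_inv_rpow_neg_le_four_rpow {x y : ℝ} (hx : 2 ≤ x) (hy : 0 ≤ y) :
    (1 - 1 / x) ^ (-y) ≤ 4 ^ (y / x) := by
  have hx0 : x ≠ 0 := by positivity
  have hb : 0 ≤ 1 - 1 / x := by
    rw [sub_nonneg, div_le_one (by positivity)]; linarith
  calc (1 - 1 / x) ^ (-y) = ((1 - 1 / x) ^ (x / 2)) ^ (-(2 * (y / x))) := by
        rw [← rpow_mul hb]; field_simp
    _ ≤ (1 / 2) ^ (-(2 * (y / x))) :=
        rpow_le_rpow_of_nonpos (by norm_num) (one_half_le_one_sub_inv_rpow_half hx)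
          (by have := div_nonneg hy (by positivity : (0 : ℝ) ≤ x); linarith)
    _ = 4 ^ (y / x) := by
        rw [rpow_neg (by norm_num), ← inv_rpow (by norm_num), rpow_mul (by norm_num)]
        norm_num

end Real

theorem stmt_7 (x : ℝ) (hx : 2 ≤ x) :
    (1 - 1 / x) ^ (-Real.sqrt x) ≤ 1 + 3 / Real.sqrt x := by
  have ht : Real.sqrt x / x = 1 / Real.sqrt x := by
    rw [Real.sqrt_div_self', one_div]
  have ht1 : 1 / Real.sqrt x ≤ 1 := by
    rw [div_le_one (by positivity), Real.one_le_sqrt]; linarith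
  calc (1 - 1 / x) ^ (-Real.sqrt x) ≤ (1 + 3) ^ (1 / Real.sqrt x) := by
        rw [← ht, show (1 : ℝ) + 3 = 4 by norm_num]
        exact Real.one_sub_inv_rpow_neg_le_four_rpow hx (Real.sqrt_nonneg x)
    _ ≤ 1 + 1 / Real.sqrt x * 3 :=
        rpow_one_add_le_one_add_mul_self (by norm_num) (by positivity) ht1
    _ = 1 + 3 / Real.sqrt x := by ring
end

section
/- Let n, t, s be positive integers with t = θ·n for θ ∈ (0,1], let α ∈ (0,1/2], p ∈ (0,1), q = 1-p, suppose nq ≥ sα ≥ 2, and let ξ ∈ [0, 3α√(θs(1-α))]. Then for every integer k with tp - ξ√(tq) ≤ k ≤ t, the binomial density ratio f(k; t, p)/f(k; t, p + 1/n) ≤ (e + 3/(sα))^θ · (1 + 3/√(sα))^{√θ·ξ}. -/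
/-!
Write `x = nq`. Cancelling the binomial coefficients, the ratio is
`(p / (p + 1/n))^k · (x / (x - 1))^(t - k)`; the first factor is at most `1`, and since the
second base exceeds `1` the worst case is the smallest admissible `k`, where
`t - k ≤ θ x + √θ ξ √x`. The factor then splits as `((x/(x-1))^x)^θ · ((x/(x-1))^√x)^(√θ ξ)`,
and the two bounds `(x/(x-1))^x ≤ e + 3/x`, `(x/(x-1))^√x ≤ 1 + 3/√x` for `x ≥ 2` (from Taylor
bounds on `log (1 + v)` with `v = 1/(x-1)`) finish, since `x ≥ sα`.
-/

open Real

lemma le_of_hasDerivAt_nonneg {F F' : ℝ → ℝ} {a b : ℝ}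
    (hF : ∀ x, a ≤ x → HasDerivAt F (F' x) x) (hF' : ∀ x, a ≤ x → 0 ≤ F' x) (hab : a ≤ b) :
    F a ≤ F b :=
  monotoneOn_of_hasDerivWithinAt_nonneg (convex_Ici a)
    (fun x hx => (hF x hx).continuousAt.continuousWithinAt)
    (fun x hx => (hF x (interior_subset hx)).hasDerivWithinAt)
    (fun x hx => hF' x (interior_subset hx)) Set.self_mem_Ici hab hab

lemma hasDerivAt_log_one_add {x : ℝ} (hx : 0 < 1 + x) :
    HasDerivAt (fun v => log (1 + v)) (1 + x)⁻¹ x := by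
  simpa using ((hasDerivAt_id x).const_add 1).log hx.ne'

lemma log_one_add_le_cubic {v : ℝ} (hv : 0 ≤ v) : log (1 + v) ≤ v - v ^ 2 / 2 + v ^ 3 / 3 := by
  have key := le_of_hasDerivAt_nonneg (F := fun v => v - v ^ 2 / 2 + v ^ 3 / 3 - log (1 + v))
    (fun x hx => by
      have hpoly := ((hasDerivAt_id x).sub ((hasDerivAt_pow 2 x).div_const 2)).add
        ((hasDerivAt_pow 3 x).div_const 3)
      exact hpoly.sub (hasDerivAt_log_one_add (by linarith)))
    (fun x hx => by
      have h1 : (0 : ℝ) < 1 + x := by linarith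
      have : (1 + x)⁻¹ ≤ 1 - x + x ^ 2 := by
        rw [inv_le_iff_one_le_mul₀ h1]; nlinarith [pow_nonneg hx 3]
      norm_num; linarith) hv
  simpa using key

lemma one_add_mul_log_one_add_le {v : ℝ} (hv : 0 ≤ v) :
    (1 + v) * log (1 + v) ≤ v + v ^ 2 / 2 - v ^ 3 / 6 + v ^ 4 / 12 := by
  have key := le_of_hasDerivAt_nonneg
    (F := fun v => v + v ^ 2 / 2 - v ^ 3 / 6 + v ^ 4 / 12 - (1 + v) * log (1 + v))
    (fun x hx => by
      have hpoly := (((hasDerivAt_id x).add ((hasDerivAt_pow 2 x).div_const 2)).sub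
        ((hasDerivAt_pow 3 x).div_const 6)).add ((hasDerivAt_pow 4 x).div_const 12)
      exact hpoly.sub (((hasDerivAt_id x).const_add 1).mul
        (hasDerivAt_log_one_add (by linarith))))
    (fun x hx => by
      have h1 : (0 : ℝ) < 1 + x := by linarith
      have := log_one_add_le_cubic hx
      field_simp
      norm_num
      nlinarith) hv
  simpa using key

lemma log_one_add_le_sub_sq_div {v : ℝ} (hv : 0 ≤ v) :
    log (1 + v) ≤ v - v ^ 2 / (2 * (1 + v)) := by
  have key := le_of_hasDerivAt_nonneg (F := fun v => v - v ^ 2 / (2 * (1 + v)) - log (1 + v))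
    (fun x hx => by
      have hden : HasDerivAt (fun v : ℝ => 2 * (1 + v)) 2 x := by
        simpa using ((hasDerivAt_id x).const_add 1).const_mul 2
      exact ((hasDerivAt_id x).sub ((hasDerivAt_pow 2 x).div hden (by positivity))).sub
        (hasDerivAt_log_one_add (by linarith)))
    (fun x hx => by
      have h1 : (0 : ℝ) < 1 + x := by linarith
      field_simp
      norm_num
      nlinarith) hv
  simpa using key

lemma div_sub_one_rpow_self_le {x : ℝ} (hx : 2 ≤ x) : (x / (x - 1)) ^ x ≤ exp 1 + 3 / x := by
  set v := 1 / (x - 1) with hv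
  have hx1 : 0 < x - 1 := by linarith
  have hv0 : 0 < v := by positivity
  have hv1 : v ≤ 1 := by rw [hv, div_le_one hx1]; linarith
  have hxv : x * v = 1 + v := by rw [hv]; field_simp; ring
  have hbase : x / (x - 1) = 1 + v := by rw [hv]; field_simp; ring
  set r := v / 2 - v ^ 2 / 6 + v ^ 3 / 12 with hr
  have hr0 : 0 ≤ r := by nlinarith
  have hr1 : r ≤ 1 := by nlinarith
  have hexponent : log (1 + v) * x ≤ 1 + r := by
    rw [← mul_le_mul_iff_left₀ hv0, mul_assoc, hxv, mul_comm]
    nlinarith [one_add_mul_log_one_add_le hv0.le]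
  have hexp_r : exp r ≤ 1 + r + r ^ 2 / 2 + 2 * r ^ 3 / 9 := by
    have h := Real.exp_bound' hr0 hr1 (n := 3) (by norm_num)
    norm_num [Finset.sum_range_succ, Nat.factorial] at h
    linarith
  -- the cubic Taylor remainder is at most `(17/16) v / (1 + v)`, and `e · 17/16 < 3`
  have htail : (r + r ^ 2 / 2 + 2 * r ^ 3 / 9) * (1 + v) ≤ 17 / 16 * v := by
    have hr2 : r ^ 2 ≤ (v / 2 - v ^ 2 / 12) ^ 2 := by
      have : r ≤ v / 2 - v ^ 2 / 12 := by nlinarith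
      nlinarith
    have hr3 : r ^ 3 ≤ (v / 2) ^ 3 := by
      have : r ≤ v / 2 := by nlinarith
      nlinarith
    nlinarith
  have he : exp 1 ≤ 2.7182818286 := exp_one_lt_d9.le
  have h3x : 3 / x = 3 * v / (1 + v) := by rw [hv]; field_simp; ring
  calc (x / (x - 1)) ^ x = exp (log (1 + v) * x) := by rw [hbase, rpow_def_of_pos (by linarith)]
    _ ≤ exp 1 * exp r := by rw [← exp_add]; exact exp_le_exp.mpr hexponent
    _ ≤ exp 1 * (1 + r + r ^ 2 / 2 + 2 * r ^ 3 / 9) := by gcongr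
    _ ≤ exp 1 + 3 / x := by
      rw [h3x, ← sub_nonneg]
      have : 0 < 1 + v := by linarith
      field_simp
      nlinarith [exp_pos 1]

lemma exp_three_halves_mul_le {u : ℝ} (hu0 : 0 ≤ u) (hu : u ≤ 3 / 4) :
    exp (3 / 2 * u) ≤ 1 + 3 * u := by
  have he : exp (9 / 8) ≤ 13 / 4 := by
    have h1 : exp (1 / 8) ≤ 1 / (1 - 1 / 8) :=
      exp_bound_div_one_sub_of_interval (by norm_num) (by norm_num)
    have h2 : exp 1 ≤ 2.7182818286 := exp_one_lt_d9.le
    have : exp (9 / 8) = exp 1 * exp (1 / 8) := by rw [← exp_add]; norm_num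
    rw [this]
    nlinarith [exp_pos (1 / 8), exp_pos 1]
  -- chord of the convex function `exp` over `[0, 9/8]`
  have hchord := convexOn_exp.2 (Set.mem_univ 0) (Set.mem_univ (9 / 8))
    (by linarith : (0 : ℝ) ≤ 1 - 4 / 3 * u) (by positivity : (0 : ℝ) ≤ 4 / 3 * u) (by ring)
  simp only [smul_eq_mul, mul_zero, zero_add, exp_zero] at hchord
  calc exp (3 / 2 * u) = exp (4 / 3 * u * (9 / 8)) := by ring_nf
    _ ≤ (1 - 4 / 3 * u) * 1 + 4 / 3 * u * exp (9 / 8) := hchord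
    _ ≤ 1 + 3 * u := by nlinarith

lemma div_sub_one_rpow_sqrt_le {x : ℝ} (hx : 2 ≤ x) :
    (x / (x - 1)) ^ √x ≤ 1 + 3 / √x := by
  have hx1 : 0 < x - 1 := by linarith
  have hw0 : 0 < √x := sqrt_pos.mpr (by linarith)
  have hw2 : √x ^ 2 = x := sq_sqrt (by linarith)
  have hlog : log (x / (x - 1)) ≤ (2 * x - 1) / (2 * x * (x - 1)) := by
    have h := log_one_add_le_sub_sq_div (v := 1 / (x - 1)) (by positivity)
    convert h using 2 <;> field_simp <;> ring
  have hexponent : log (x / (x - 1)) * √x ≤ 3 / 2 * (1 / √x) := by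
    refine (mul_le_mul_of_nonneg_right hlog hw0.le).trans ?_
    rw [div_mul_eq_mul_div, mul_one_div, div_le_div_iff₀ (by positivity) hw0]
    nlinarith
  have hu : 1 / √x ≤ 3 / 4 := by rw [div_le_div_iff₀ hw0 (by norm_num)]; nlinarith
  calc (x / (x - 1)) ^ √x = exp (log (x / (x - 1)) * √x) := rpow_def_of_pos (by positivity) _
    _ ≤ exp (3 / 2 * (1 / √x)) := exp_le_exp.mpr hexponent
    _ ≤ 1 + 3 * (1 / √x) := exp_three_halves_mul_le (by positivity) hu
    _ = 1 + 3 / √x := by ring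

lemma div_sub_one_rpow_le {x y m a b : ℝ} (hy : 2 ≤ y) (hyx : y ≤ x) (ha : 0 ≤ a) (hb : 0 ≤ b)
    (hm : m ≤ a * x + b * √x) :
    (x / (x - 1)) ^ m ≤ (exp 1 + 3 / y) ^ a * (1 + 3 / √y) ^ b := by
  have hx : 2 ≤ x := hy.trans hyx
  have hbase : 1 ≤ x / (x - 1) := by rw [le_div_iff₀ (by linarith)]; linarith
  have hbase0 : 0 ≤ x / (x - 1) := zero_le_one.trans hbase
  calc (x / (x - 1)) ^ m ≤ (x / (x - 1)) ^ (a * x + b * √x) :=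
        rpow_le_rpow_of_exponent_le hbase hm
    _ = ((x / (x - 1)) ^ x) ^ a * ((x / (x - 1)) ^ √x) ^ b := by
        rw [rpow_add (by linarith), ← rpow_mul hbase0, ← rpow_mul hbase0, mul_comm a,
          mul_comm b]
    _ ≤ (exp 1 + 3 / x) ^ a * (1 + 3 / √x) ^ b := by
        gcongr
        · exact div_sub_one_rpow_self_le hx
        · exact div_sub_one_rpow_sqrt_le hx
    _ ≤ (exp 1 + 3 / y) ^ a * (1 + 3 / √y) ^ b := by
        have hy0 : 0 < y := by linarith
        gcongr

lemma binomial_pmf_div_le {t k : ℕ} (hk : k ≤ t) {p p' : ℝ} (hp : 0 ≤ p) (hpp' : p ≤ p')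
    (hp' : p' ≤ 1) :
    t.choose k * p ^ k * (1 - p) ^ (t - k) / (t.choose k * p' ^ k * (1 - p') ^ (t - k)) ≤
      ((1 - p) / (1 - p')) ^ (t - k) := by
  have hC : (t.choose k : ℝ) ≠ 0 := by exact_mod_cast (Nat.choose_pos hk).ne'
  rw [mul_assoc, mul_assoc, mul_div_mul_left _ _ hC, ← div_mul_div_comm, ← div_pow, ← div_pow]
  refine mul_le_of_le_one_left (by apply pow_nonneg; apply div_nonneg <;> linarith) ?_
  exact pow_le_one₀ (div_nonneg hp (hp.trans hpp')) (div_le_one_of_le₀ hpp' (hp.trans hpp'))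

theorem stmt_10_general (n t s : ℕ) (hn : 0 < n)
    (θ : ℝ) (hθ : θ ∈ Set.Ioc (0:ℝ) 1) (htθ : (t : ℝ) = θ * n)
    (α : ℝ)
    (p : ℝ) (hp : p ∈ Set.Ioo (0:ℝ) 1) (q : ℝ) (hq : q = 1 - p)
    (hsα : 2 ≤ s * α) (hnq : s * α ≤ n * q)
    (ξ : ℝ) (hξ : ξ ∈ Set.Icc 0 (3 * α * Real.sqrt (θ * s * (1 - α))))
    (f : ℕ → ℕ → ℝ → ℝ)
    (hf : ∀ k t p, f k t p = (t.choose k : ℝ) * p ^ k * (1 - p) ^ (t - k))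
    (k : ℕ) (hk1 : t * p - ξ * Real.sqrt (t * q) ≤ (k : ℝ)) (hk2 : k ≤ t) :
    f k t p / f k t (p + 1 / n) ≤
      (Real.exp 1 + 3 / (s * α)) ^ θ *
        (1 + 3 / Real.sqrt (s * α)) ^ (Real.sqrt θ * ξ) := by
  have hn' : (0 : ℝ) < n := by exact_mod_cast hn
  have hnq2 : 2 ≤ n * q := hsα.trans hnq
  have hinv_le : 1 / (n : ℝ) ≤ q := by rw [div_le_iff₀ hn']; linarith
  have hbase : (1 - p) / (1 - (p + 1 / n)) = n * q / (n * q - 1) := by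
    rw [← hq, show 1 - (p + 1 / n) = q - 1 / n by rw [hq]; ring]
    field_simp
  have hexponent : ((t - k : ℕ) : ℝ) ≤ θ * (n * q) + √θ * ξ * √(n * q) := by
    have htq : (t : ℝ) * q = θ * (n * q) := by rw [htθ]; ring
    have hsqrt : √θ * ξ * √(n * q) = ξ * √(t * q) := by
      rw [htq, sqrt_mul hθ.1.le]; ring
    have htp : (t : ℝ) * q = t - t * p := by rw [hq]; ring
    rw [Nat.cast_sub hk2, hsqrt, ← htq]
    linarith
  rw [hf, hf]
  calc _ ≤ ((1 - p) / (1 - (p + 1 / n))) ^ (t - k) :=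
        binomial_pmf_div_le hk2 hp.1.le (by simp) (by linarith)
    _ = (n * q / (n * q - 1)) ^ ((t - k : ℕ) : ℝ) := by rw [hbase, rpow_natCast]
    _ ≤ _ := div_sub_one_rpow_le hsα hnq hθ.1.le (by positivity [hξ.1]) hexponent

theorem stmt_10 (n t s : ℕ) (hn : 0 < n) (ht : 0 < t) (hs : 0 < s)
    (θ : ℝ) (hθ : θ ∈ Set.Ioc (0:ℝ) 1) (htθ : (t : ℝ) = θ * n)
    (α : ℝ) (hα : α ∈ Set.Ioc (0:ℝ) (1/2))
    (p : ℝ) (hp : p ∈ Set.Ioo (0:ℝ) 1) (q : ℝ) (hq : q = 1 - p)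
    (hsα : 2 ≤ s * α) (hnq : s * α ≤ n * q)
    (ξ : ℝ) (hξ : ξ ∈ Set.Icc 0 (3 * α * Real.sqrt (θ * s * (1 - α))))
    (f : ℕ → ℕ → ℝ → ℝ)
    (hf : ∀ k t p, f k t p = (t.choose k : ℝ) * p ^ k * (1 - p) ^ (t - k))
    (k : ℕ) (hk1 : t * p - ξ * Real.sqrt (t * q) ≤ (k : ℝ)) (hk2 : k ≤ t) :
    f k t p / f k t (p + 1 / n) ≤
      (Real.exp 1 + 3 / (s * α)) ^ θ *
        (1 + 3 / Real.sqrt (s * α)) ^ (Real.sqrt θ * ξ) :=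
  stmt_10_general n t s hn θ hθ htθ α p hp q hq hsα hnq ξ hξ f hf k hk1 hk2
end

section
/- Let K ≥ 1, β ∈ [0,1), q a probability vector in ℝ^K, Q[y',y] = (1-β)𝟙[y'=y] + β·q(y'), and ℓ : Fin K → ℝ with |ℓ(y')| ≤ 1 for all y'. Define ℓ̃(y) = Σ_{y'} Q⁻¹[y',y]·ℓ(y'). Then |ℓ̃(y)| ≤ √2·K/(1-β) for all y. -/
/-!
The matrix `Q = (1 - β) I + β q 𝟙ᵀ` is a rank-one perturbation of a multiple of the identity,
and since `𝟙ᵀ q = 1` its inverse is explicit: `Q⁻¹ = (I - β q 𝟙ᵀ) / (1 - β)`. For `0 ≤ β < 1`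
and a probability vector `q`, every entry of this inverse has absolute value at most
`1 / (1 - β)`, so each `ℓ̃ y` is a sum of `K` terms of size at most `1 / (1 - β)`.
-/

open Finset

theorem abs_sum_mul_le_card_mul {ι : Type*} [Fintype ι] {a ℓ : ι → ℝ} {B : ℝ}
    (ha : ∀ i, |a i| ≤ B) (hℓ : ∀ i, |ℓ i| ≤ 1) : |∑ i, a i * ℓ i| ≤ Fintype.card ι * B := by
  calc |∑ i, a i * ℓ i| ≤ ∑ i, |a i * ℓ i| := abs_sum_le_sum_abs _ _
    _ ≤ ∑ _i : ι, B := sum_le_sum fun i _ => by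
        rw [abs_mul]
        exact (mul_le_of_le_one_right (abs_nonneg _) (hℓ i)).trans (ha i)
    _ = Fintype.card ι * B := by rw [sum_const, card_univ, nsmul_eq_mul]

section LabelNoise

variable {ι : Type*} [Fintype ι] [DecidableEq ι]

theorem Matrix.inv_eq_of_label_noise {𝕜 : Type*} [Field 𝕜] {β : 𝕜} (hβ : 1 - β ≠ 0)
    {q : ι → 𝕜} (hq : ∑ i, q i = 1) {Q : Matrix ι ι 𝕜}
    (hQ : ∀ i j, Q i j = (1 - β) * (if i = j then 1 else 0) + β * q i) :
    Q⁻¹ = Matrix.of fun i j => ((if i = j then 1 else 0) - β * q i) / (1 - β) := by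
  refine Matrix.inv_eq_right_inv ?_
  ext i j
  have hcol : ∑ k, ((if k = j then (1 : 𝕜) else 0) - β * q k) = 1 - β := by
    rw [sum_sub_distrib, ← mul_sum, hq, sum_ite_eq' univ j, if_pos (mem_univ j), mul_one]
  simp only [Matrix.mul_apply, Matrix.of_apply, hQ, add_mul, sum_add_distrib, mul_assoc,
    ← mul_sum, ← sum_div, hcol, div_self hβ, ite_mul, one_mul, zero_mul, sum_ite_eq,
    mem_univ, if_true, Matrix.one_apply]
  field_simp
  ring

theorem abs_label_noise_inv_entry_le {β : ℝ} (hβ0 : 0 ≤ β) (hβ1 : β < 1) {q : ι → ℝ}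
    (hq0 : ∀ i, 0 ≤ q i) (hq1 : ∑ i, q i = 1) (i j : ι) :
    |((if i = j then 1 else 0) - β * q i) / (1 - β)| ≤ 1 / (1 - β) := by
  have hqi : q i ≤ 1 := hq1 ▸ single_le_sum (fun k _ => hq0 k) (mem_univ i)
  have hβq0 : 0 ≤ β * q i := mul_nonneg hβ0 (hq0 i)
  have hβq1 : β * q i ≤ 1 := mul_le_one₀ hβ1.le (hq0 i) hqi
  rw [abs_div, abs_of_pos (sub_pos.mpr hβ1)]
  gcongr
  rw [abs_le]
  split_ifs <;> constructor <;> linarith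

end LabelNoise

theorem stmt_18_general (K : ℕ) (β : ℝ) (hβ0 : 0 ≤ β) (hβ1 : β < 1)
    (q : Fin K → ℝ) (hq0 : ∀ y, 0 ≤ q y) (hq1 : ∑ y, q y = 1)
    (Q : Matrix (Fin K) (Fin K) ℝ)
    (hQ : ∀ y' y, Q y' y = (1 - β) * (if y' = y then 1 else 0) + β * q y')
    (ℓ : Fin K → ℝ) (hℓ : ∀ y', |ℓ y'| ≤ 1)
    (ℓt : Fin K → ℝ) (hℓt : ∀ y, ℓt y = ∑ y', Q⁻¹ y' y * ℓ y') :
    ∀ y, |ℓt y| ≤ Real.sqrt 2 * K / (1 - β) := by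
  intro y
  have h1β : 0 < 1 - β := sub_pos.mpr hβ1
  have hinv := Matrix.inv_eq_of_label_noise h1β.ne' hq1 hQ
  have hbound : |ℓt y| ≤ K * (1 / (1 - β)) := by
    rw [hℓt, hinv]
    simpa only [Matrix.of_apply, Fintype.card_fin] using abs_sum_mul_le_card_mul
      (fun y' => abs_label_noise_inv_entry_le hβ0 hβ1 hq0 hq1 y' y) hℓ
  calc |ℓt y| ≤ K * (1 / (1 - β)) := hbound
    _ ≤ Real.sqrt 2 * K / (1 - β) := by
        rw [mul_one_div]
        gcongr
        exact le_mul_of_one_le_left (Nat.cast_nonneg K) Real.one_lt_sqrt_two.le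

theorem stmt_18 (K : ℕ) (hK : 1 ≤ K) (β : ℝ) (hβ0 : 0 ≤ β) (hβ1 : β < 1)
    (q : Fin K → ℝ) (hq0 : ∀ y, 0 ≤ q y) (hq1 : ∑ y, q y = 1)
    (Q : Matrix (Fin K) (Fin K) ℝ)
    (hQ : ∀ y' y, Q y' y = (1 - β) * (if y' = y then 1 else 0) + β * q y')
    (ℓ : Fin K → ℝ) (hℓ : ∀ y', |ℓ y'| ≤ 1)
    (ℓt : Fin K → ℝ) (hℓt : ∀ y, ℓt y = ∑ y', Q⁻¹ y' y * ℓ y') :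
    ∀ y, |ℓt y| ≤ Real.sqrt 2 * K / (1 - β) :=
  stmt_18_general K β hβ0 hβ1 q hq0 hq1 Q hQ ℓ hℓ ℓt hℓt
end
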